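/- arXiv:1509.02989 — 3 statements merged into one kernel-verified Lean document; each statement's English description precedes it below -/
import Mathlib

section
/- Let M = [[a,b],[c,d]] ∈ SL(2,ℝ) with c ≠ 0 and cx + d = 0, and let C be the circle centered at x + y·i with radius y > 0. Then the image of C under the Möbius transformation z ↦ (az+b)/(cz+d) is the horizontal line {z : Im z = 1/(2c²y)}. -/
open Complex Set

/-!
Since `c·x + d = 0` and `a·d - b·c = 1`, the map is `z ↦ a/c - 1/(c²(z - x))`, i.e. the
translation `z ↦ z - x`, followed by inversion, followed by a real affine map. The translated
circle `|u - y·i| = y` is tangent to the real axis at `0`; expanding, it is `|u|² = 2y·Im u`,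
which says exactly that `Im (1/u) = -1/(2y)`. So inversion sends it (minus `0`) onto a
horizontal line, and the real affine map `w ↦ a/c - w/c²` moves that line to `Im w = 1/(2c²y)`.
-/

lemma ne_zero_of_det_eq_one_of_pole {R : Type*} [CommRing R] [Nontrivial R] {a b c d x : R}
    (hdet : a * d - b * c = 1) (hcxd : c * x + d = 0) : c ≠ 0 := by
  rintro rfl
  simp_all

lemma mobius_eq_sub_inv_of_pole {K : Type*} [Field K] {a b c d x z : K}
    (hdet : a * d - b * c = 1) (hcxd : c * x + d = 0) (hz : z ≠ x) :
    (a * z + b) / (c * z + d) = a / c - (c ^ 2)⁻¹ * (z - x)⁻¹ := by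
  have hc := ne_zero_of_det_eq_one_of_pole hdet hcxd
  obtain rfl : d = -(c * x) := by linear_combination hcxd
  have hzx : z - x ≠ 0 := sub_ne_zero.2 hz
  rw [show c * z + -(c * x) = c * (z - x) by ring]
  field_simp
  linear_combination -hdet

lemma norm_sub_ofReal_mul_I_eq_iff_inv_im {y : ℝ} (hy : 0 < y) {u : ℂ} (hu : u ≠ 0) :
    ‖u - y * I‖ = y ↔ (u⁻¹).im = -1 / (2 * y) := by
  have hnormSq : normSq (u - y * I) = normSq u - 2 * y * u.im + y ^ 2 := by
    simp only [normSq_apply, sub_re, sub_im, mul_re, mul_im, ofReal_re, ofReal_im, I_re, I_im]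
    ring
  have hu' : normSq u ≠ 0 := (normSq_pos.2 hu).ne'
  rw [inv_im, ← sq_eq_sq₀ (norm_nonneg _) hy.le, Complex.sq_norm, hnormSq,
    div_eq_div_iff hu' (by positivity)]
  constructor <;> intro h <;> linarith

lemma image_inv_sub_setOf_norm_sub_eq {x y : ℝ} (hy : 0 < y) :
    (fun z : ℂ => (z - x)⁻¹) '' ({z | ‖z - (x + y * I)‖ = y} \ {(x : ℂ)}) =
      {w | w.im = -1 / (2 * y)} := by
  ext w
  simp only [mem_image, mem_sdiff, mem_ofPred_eq, mem_singleton_iff]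
  constructor
  · rintro ⟨z, ⟨hz, hzx⟩, rfl⟩
    rwa [← norm_sub_ofReal_mul_I_eq_iff_inv_im hy (sub_ne_zero.2 hzx),
      show z - x - y * I = z - (x + y * I) by ring]
  · intro hw
    have hw0 : w ≠ 0 := by
      rintro rfl
      have : -1 / (2 * y) < 0 := div_neg_of_neg_of_pos (by norm_num) (by positivity)
      simp only [zero_im] at hw
      linarith
    refine ⟨x + w⁻¹, ⟨?_, by simpa using hw0⟩, by simp⟩
    rw [show (x : ℂ) + w⁻¹ - (x + y * I) = w⁻¹ - y * I by ring,
      norm_sub_ofReal_mul_I_eq_iff_inv_im hy (inv_ne_zero hw0), inv_inv, hw]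

lemma image_ofReal_add_ofReal_mul_setOf_im_eq {s r : ℝ} (hr : r ≠ 0) (k : ℝ) :
    (fun w : ℂ => s + r * w) '' {w | w.im = k} = {w | w.im = r * k} := by
  ext w
  simp only [mem_image, mem_ofPred_eq]
  constructor
  · rintro ⟨v, hv, rfl⟩
    simp [hv]
  · intro hw
    refine ⟨(w - s) / r, ?_, ?_⟩
    · simp [div_ofReal_im, hw, hr]
    · simp only [mul_div_cancel₀ _ (ofReal_ne_zero.2 hr), add_sub_cancel]

theorem mobius_image_of_circle_through_pole_general
    (a b c d x y : ℝ) (hdet : a * d - b * c = 1)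
    (hcxd : c * x + d = 0) (hy : 0 < y) :
    (fun z : ℂ => (a * z + b) / (c * z + d)) ''
        ({z : ℂ | ‖z - (x + y * I)‖ = y} \ {(x : ℂ)}) =
      {w : ℂ | w.im = 1 / (2 * c ^ 2 * y)} := by
  have hc := ne_zero_of_det_eq_one_of_pole hdet hcxd
  have hmobius : EqOn (fun z : ℂ => (a * z + b) / (c * z + d))
      ((fun w : ℂ => ((a / c : ℝ) : ℂ) + ((-(c ^ 2)⁻¹ : ℝ) : ℂ) * w) ∘
        fun z => (z - x)⁻¹)
      ({z : ℂ | ‖z - (x + y * I)‖ = y} \ {(x : ℂ)}) := by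
    rintro z ⟨-, hzx⟩
    have hdetC : (a : ℂ) * d - b * c = 1 := by exact_mod_cast hdet
    have hcxdC : (c : ℂ) * x + d = 0 := by exact_mod_cast hcxd
    simp only [Function.comp_apply, mobius_eq_sub_inv_of_pole hdetC hcxdC hzx]
    push_cast
    ring
  rw [image_congr hmobius, image_comp, image_inv_sub_setOf_norm_sub_eq hy,
    image_ofReal_add_ofReal_mul_setOf_im_eq (by simpa using hc)]
  congr! 3
  field_simp

/-- If `c ≠ 0` and `c·x + d = 0` (so the pole of the Möbius map lies at the
tangency point `x` of the circle), then the Möbius transformation maps the circle centered at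
`x + y·i` with radius `y > 0` (minus the pole `x`, which goes to `∞`) onto the horizontal line
`Im z = 1/(2c²y)`. -/
theorem mobius_image_of_circle_through_pole
    (a b c d x y : ℝ) (hdet : a * d - b * c = 1) (hc : c ≠ 0)
    (hcxd : c * x + d = 0) (hy : 0 < y) :
    (fun z : ℂ => (a * z + b) / (c * z + d)) ''
        ({z : ℂ | ‖z - (x + y * I)‖ = y} \ {(x : ℂ)}) =
      {w : ℂ | w.im = 1 / (2 * c ^ 2 * y)} :=
  mobius_image_of_circle_through_pole_general a b c d x y hdet hcxd hy
end

section
/- Let K₁ and K₂ be two externally tangent circles in the upper half-plane, each tangent to the real axis, and let K be any circle tangent to the real axis contained in the (closed) curvilinear triangular region bounded by K₁, K₂, and the real axis, with K distinct from K₁ and K₂. Then the radius of K is strictly smaller than the radius of K₁ and strictly smaller than the radius of K₂. -/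
/-!
Two circles tangent to `ℝ` at `a` and `b`, with radii `s` and `t`, have centres at distance
`√((a - b)² + (s - t)²)`, so they are tangent iff `(a - b)² = 4st` and have disjoint interiors
iff `(a - b)² ≥ 4st`. Since `K` touches `ℝ` strictly between `x₁` and `x₂` and avoids `K₂`,
`4 r r₂ ≤ (x - x₂)² < (x₁ - x₂)² = 4 r₁ r₂`, whence `r < r₁`; symmetrically `r < r₂`.
-/

open Complex

section TangentToRealAxis

variable {a b s t : ℝ}

theorem dist_ofReal_add_mul_I_sq (a b s t : ℝ) :
    dist ((a : ℂ) + s * I) ((b : ℂ) + t * I) ^ 2 = (a - b) ^ 2 + (s - t) ^ 2 := by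
  rw [Complex.dist_eq, Complex.sq_norm, Complex.normSq_apply]
  simp only [sub_re, add_re, ofReal_re, mul_re, I_re, mul_zero, ofReal_im, I_im, mul_one,
    sub_self, add_zero, sub_im, add_im, mul_im, zero_add]
  ring

theorem sq_sub_eq_four_mul_of_dist_eq_add (h : dist ((a : ℂ) + s * I) ((b : ℂ) + t * I) = s + t) :
    (a - b) ^ 2 = 4 * s * t := by
  have := dist_ofReal_add_mul_I_sq a b s t
  rw [h] at this
  linarith

theorem four_mul_le_sq_sub_of_add_le_dist (hst : 0 ≤ s + t)
    (h : s + t ≤ dist ((a : ℂ) + s * I) ((b : ℂ) + t * I)) :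
    4 * s * t ≤ (a - b) ^ 2 := by
  have hsq := pow_le_pow_left₀ hst h 2
  rw [dist_ofReal_add_mul_I_sq] at hsq
  linarith

/-- A circle `(c, r)` avoiding the circle `(b, t)` and touching `ℝ` closer to `b` than the
circle `(a, s)` tangent to `(b, t)` is smaller than `(a, s)`. -/
theorem radius_lt_of_dist_eq_add_of_add_le_dist {c r : ℝ} (ht : 0 < t) (hrt : 0 ≤ r + t)
    (hc : |c - b| < |a - b|)
    (htangent : dist ((a : ℂ) + s * I) ((b : ℂ) + t * I) = s + t)
    (hdisj : r + t ≤ dist ((c : ℂ) + r * I) ((b : ℂ) + t * I)) :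
    r < s := by
  have hlt : 4 * r * t < 4 * s * t :=
    calc 4 * r * t ≤ (c - b) ^ 2 := four_mul_le_sq_sub_of_add_le_dist hrt hdisj
      _ < (a - b) ^ 2 := sq_lt_sq.mpr hc
      _ = 4 * s * t := sq_sub_eq_four_mul_of_dist_eq_add htangent
  nlinarith

end TangentToRealAxis

/-- Let `K₁`, `K₂` be externally tangent circles in the upper half-plane,
each tangent to the real axis (centers `xᵢ + rᵢ·i`, radii `rᵢ`), and let `K` (center
`x + r·i`, radius `r`) be a circle tangent to the real axis contained in the curvilinear
triangular gap bounded by `K₁`, `K₂` and `ℝ`: its tangency point `x` lies strictly between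
`x₁` and `x₂` and its interior is disjoint from the interiors of `K₁` and `K₂`. Then
`r < r₁` and `r < r₂`. -/
theorem circle_in_gap_has_smaller_radius
    (x₁ x₂ x r₁ r₂ r : ℝ) (hr₁ : 0 < r₁) (hr₂ : 0 < r₂) (hr : 0 < r)
    (htangent : dist ((x₁ : ℂ) + r₁ * I) ((x₂ : ℂ) + r₂ * I) = r₁ + r₂)
    (hx₁ : x₁ < x) (hx₂ : x < x₂)
    (hdisj₁ : r + r₁ ≤ dist ((x : ℂ) + r * I) ((x₁ : ℂ) + r₁ * I))
    (hdisj₂ : r + r₂ ≤ dist ((x : ℂ) + r * I) ((x₂ : ℂ) + r₂ * I)) :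
    r < r₁ ∧ r < r₂ := by
  have hcloser₂ : |x - x₂| < |x₁ - x₂| := by
    rw [abs_of_neg (by linarith), abs_of_neg (by linarith)]
    linarith
  have hcloser₁ : |x - x₁| < |x₂ - x₁| := by
    rw [abs_of_pos (by linarith), abs_of_pos (by linarith)]
    linarith
  have htangent' : dist ((x₂ : ℂ) + r₂ * I) ((x₁ : ℂ) + r₁ * I) = r₂ + r₁ := by
    rw [dist_comm, htangent, add_comm]
  exact ⟨radius_lt_of_dist_eq_add_of_add_le_dist hr₂ (by positivity) hcloser₂ htangent hdisj₂,
    radius_lt_of_dist_eq_add_of_add_le_dist hr₁ (by positivity) hcloser₁ htangent' hdisj₁⟩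
end

section
/- Let γ = [[a,b],[c,d]] ∈ SL(2,ℝ) with c ≠ 0 and cα_i + d ≠ 0, cα_l + d ≠ 0 for distinct reals α_i, α_l. Then γ(α_l) lies strictly between γ(α_i) and γ(∞) = a/c if and only if sign(c(cα_i + d)) = sign(α_l - α_i). -/
lemma between_iff_aux (x y z : ℝ) :
    (min x y < z ∧ z < max x y) ↔ (x - z) * (y - z) < 0 := by
  rcases le_total x y with h | h
  · rw [min_eq_left h, max_eq_right h]
    constructor
    · rintro ⟨h1, h2⟩; nlinarith
    · intro hp; constructor <;> nlinarith
  · rw [min_eq_right h, max_eq_left h]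
    constructor
    · rintro ⟨h1, h2⟩; nlinarith
    · intro hp; constructor <;> nlinarith

lemma sign_eq_sign_iff_aux {x y : ℝ} (hx : x ≠ 0) (hy : y ≠ 0) :
    Real.sign x = Real.sign y ↔ 0 < x * y := by
  rcases hx.lt_or_gt with hx' | hx' <;> rcases hy.lt_or_gt with hy' | hy'
  · norm_num [Real.sign_of_neg hx', Real.sign_of_neg hy', mul_pos_of_neg_of_neg hx' hy']
  · norm_num [Real.sign_of_neg hx', Real.sign_of_pos hy', (mul_neg_of_neg_of_pos hx' hy').not_gt]
  · norm_num [Real.sign_of_pos hx', Real.sign_of_neg hy', (mul_neg_of_pos_of_neg hx' hy').not_gt]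
  · norm_num [Real.sign_of_pos hx', Real.sign_of_pos hy', mul_pos hx' hy']

/-- For `γ = [[a,b],[c,d]] ∈ SL(2,ℝ)` with `c ≠ 0` and distinct reals
`αᵢ, αₗ` away from the pole, `γ(αₗ)` lies strictly between `γ(αᵢ)` and `γ(∞) = a/c`
if and only if `sign(c(cαᵢ+d)) = sign(αₗ - αᵢ)`. -/
theorem mobius_between_infinity_iff_sign
    (a b c d αi αl : ℝ) (hdet : a * d - b * c = 1) (hc : c ≠ 0)
    (hil : αi ≠ αl) (hi : c * αi + d ≠ 0) (hl : c * αl + d ≠ 0) :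
    (min ((a * αi + b) / (c * αi + d)) (a / c) < (a * αl + b) / (c * αl + d) ∧
        (a * αl + b) / (c * αl + d) < max ((a * αi + b) / (c * αi + d)) (a / c)) ↔
      Real.sign (c * (c * αi + d)) = Real.sign (αl - αi) := by
  have hcp : c * (c * αi + d) ≠ 0 := mul_ne_zero hc hi
  have hli : αl - αi ≠ 0 := sub_ne_zero.mpr (Ne.symm hil)
  rw [between_iff_aux, sign_eq_sign_iff_aux hcp hli]
  have key : ((a * αi + b) / (c * αi + d) - (a * αl + b) / (c * αl + d)) *
      (a / c - (a * αl + b) / (c * αl + d)) =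
      (αi - αl) / (c * (c * αi + d) * (c * αl + d) ^ 2) := by
    have e1 : (a * αi + b) / (c * αi + d) - (a * αl + b) / (c * αl + d) =
        (αi - αl) / ((c * αi + d) * (c * αl + d)) := by
      rw [div_sub_div _ _ hi hl]
      congr 1
      linear_combination (αi - αl) * hdet
    have e2 : a / c - (a * αl + b) / (c * αl + d) = 1 / (c * (c * αl + d)) := by
      rw [div_sub_div _ _ hc hl]
      congr 1
      linear_combination hdet
    rw [e1, e2, div_mul_div_comm, mul_one]
    congr 1
    ring
  rw [key]
  rw [div_neg_iff]
  have hq2 : (0:ℝ) < (c * αl + d) ^ 2 := by positivity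
  constructor
  · rintro (⟨h1, h2⟩ | ⟨h1, h2⟩) <;> nlinarith
  · intro h
    rcases lt_or_gt_of_ne hli with h' | h'
    · left; constructor <;> nlinarith
    · right; constructor <;> nlinarith
end
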